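/- If g : I → ℝ is continuous on a compact interval I = [u,v] and there are two disjoint closed subintervals L, R ⊂ I such that g maps each of L and R monotonically onto I, then for every finite word w ∈ {0,1}^n there exists a point x ∈ I whose first n itinerary symbols under g match w (i.e., g^k(x) ∈ L if w_k = 0 and g^k(x) ∈ R if w_k = 1, for 0 ≤ k < n). -/
import Mathlib


/-- Horseshoe / full-shift property: if `g` maps each of two disjoint closed
subintervals `L` and `R` of `I` monotonically onto `I`, then every finite
`{0,1}`-word is realized as an itinerary. -/
theorem horseshoe_itineraries (u v : ℝ) (huv : u < v)
    (g : ℝ → ℝ) (hg : ContinuousOn g (Set.Icc u v))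
    (l₁ l₂ r₁ r₂ : ℝ)
    (hL : Set.Icc l₁ l₂ ⊆ Set.Icc u v) (hR : Set.Icc r₁ r₂ ⊆ Set.Icc u v)
    (hl : l₁ ≤ l₂) (hr : r₁ ≤ r₂)
    (hdisj : Disjoint (Set.Icc l₁ l₂) (Set.Icc r₁ r₂))
    (hgL : (MonotoneOn g (Set.Icc l₁ l₂) ∨ AntitoneOn g (Set.Icc l₁ l₂)) ∧
      g '' Set.Icc l₁ l₂ = Set.Icc u v)
    (hgR : (MonotoneOn g (Set.Icc r₁ r₂) ∨ AntitoneOn g (Set.Icc r₁ r₂)) ∧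
      g '' Set.Icc r₁ r₂ = Set.Icc u v) :
    ∀ n : ℕ, ∀ w : Fin n → Bool, ∃ x ∈ Set.Icc u v, ∀ k : Fin n,
      (w k = false → g^[(k : ℕ)] x ∈ Set.Icc l₁ l₂) ∧
      (w k = true → g^[(k : ℕ)] x ∈ Set.Icc r₁ r₂) := by
  -- Strengthened claim: we can also prescribe the value of `g^[n] x`.
  have key : ∀ n : ℕ, ∀ w : Fin n → Bool, ∀ y ∈ Set.Icc u v,
      ∃ x ∈ Set.Icc u v, (∀ k : Fin n,
        (w k = false → g^[(k : ℕ)] x ∈ Set.Icc l₁ l₂) ∧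
        (w k = true → g^[(k : ℕ)] x ∈ Set.Icc r₁ r₂)) ∧ g^[n] x = y := by
    intro n
    induction n with
    | zero =>
      intro w y hy
      exact ⟨y, hy, fun k => k.elim0, rfl⟩
    | succ n ih =>
      intro w y hy
      obtain ⟨x', hx', hit', hx'y⟩ := ih (fun k => w k.succ) y hy
      -- pick a preimage of x' in the interval prescribed by `w 0`
      have hpre : ∃ x, (w 0 = false → x ∈ Set.Icc l₁ l₂) ∧
          (w 0 = true → x ∈ Set.Icc r₁ r₂) ∧ g x = x' := by
        cases hw0 : w 0 with
        | false =>
          have : x' ∈ g '' Set.Icc l₁ l₂ := hgL.2 ▸ hx'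
          obtain ⟨x, hx, hgx⟩ := this
          exact ⟨x, fun _ => hx, fun h => by simp [hw0] at h, hgx⟩
        | true =>
          have : x' ∈ g '' Set.Icc r₁ r₂ := hgR.2 ▸ hx'
          obtain ⟨x, hx, hgx⟩ := this
          exact ⟨x, fun h => by simp [hw0] at h, fun _ => hx, hgx⟩
      obtain ⟨x, hxL, hxR, hgx⟩ := hpre
      have hxI : x ∈ Set.Icc u v := by
        cases hw0 : w 0 with
        | false => exact hL (hxL hw0)
        | true => exact hR (hxR hw0)
      refine ⟨x, hxI, ?_, ?_⟩
      · intro k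
        refine Fin.cases ?_ ?_ k
        · exact ⟨fun h => hxL h, fun h => hxR h⟩
        · intro j
          have hit : (∀ h : w j.succ = false, g^[(j : ℕ)] x' ∈ Set.Icc l₁ l₂) ∧
              (∀ h : w j.succ = true, g^[(j : ℕ)] x' ∈ Set.Icc r₁ r₂) := hit' j
          have heq : g^[((j.succ : Fin (n+1)) : ℕ)] x = g^[(j : ℕ)] x' := by
            have : ((j.succ : Fin (n+1)) : ℕ) = (j : ℕ) + 1 := rfl
            rw [this, Function.iterate_succ_apply, hgx]
          rw [heq]
          exact hit
      · rw [Function.iterate_succ_apply, hgx, hx'y]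
  intro n w
  obtain ⟨x, hx, hit, -⟩ := key n w u ⟨le_refl u, le_of_lt huv⟩
  exact ⟨x, hx, hit⟩
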